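/- Let Ψ̂ be the convex hull of the rays Rᵢ = {γ(Xᵢ,Yᵢ) : γ ≥ 0}, i = 1,…,n, in ℝ₊^{p+1}. Let P(x₀) = {x ∈ ℝ₊^p : x₀ᵀ(x − x₀) = 0} and P†(x₀) = P(x₀) × ℝ₊. Let Pᵢ = (‖x₀‖²/(x₀ᵀXᵢ))(Xᵢ, Yᵢ) (assuming x₀ᵀXᵢ > 0 for all i), and let Ψ̂(x₀) be the convex hull of {P₁,…,Pₙ}. Then Ψ̂(x₀) = P†(x₀) ∩ Ψ̂. -/
import Mathlib


open Matrix

/-- With `Ψ̂` the convex hull of the rays `Rᵢ`,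
`Pᵢ = (‖x₀‖²/(x₀ᵀXᵢ))(Xᵢ,Yᵢ)` and `P†(x₀) = {x ∈ ℝ₊^p : x₀ᵀ(x−x₀)=0} × ℝ₊`, the
convex hull of `{P₁,…,Pₙ}` equals `P†(x₀) ∩ Ψ̂`. -/
theorem stmt9 {p n : ℕ} (X : Fin n → Fin p → ℝ) (Y : Fin n → ℝ)
    (hX : ∀ i j, 0 ≤ X i j) (hY : ∀ i, 0 ≤ Y i)
    (x₀ : Fin p → ℝ) (hx₀pos : ∀ j, 0 ≤ x₀ j) (hx₀ : x₀ ≠ 0)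
    (hXx₀ : ∀ i, 0 < x₀ ⬝ᵥ X i)
    (PsiHat : Set ((Fin p → ℝ) × ℝ))
    (hPsiHat : PsiHat = convexHull ℝ
      (⋃ i, {z : (Fin p → ℝ) × ℝ | ∃ γ : ℝ, 0 ≤ γ ∧ z = (γ • X i, γ * Y i)}))
    (P : Fin n → (Fin p → ℝ) × ℝ)
    (hP : ∀ i, P i = (((x₀ ⬝ᵥ x₀) / (x₀ ⬝ᵥ X i)) • X i,
      ((x₀ ⬝ᵥ x₀) / (x₀ ⬝ᵥ X i)) * Y i)) :
    convexHull ℝ (Set.range P) =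
      {z : (Fin p → ℝ) × ℝ | (∀ j, 0 ≤ z.1 j) ∧ x₀ ⬝ᵥ (z.1 - x₀) = 0 ∧ 0 ≤ z.2} ∩
        PsiHat := by
  have hc : 0 < x₀ ⬝ᵥ x₀ := by
    rcases lt_or_eq_of_le (Finset.sum_nonneg fun j _ => mul_self_nonneg (x₀ j)) with h | h
    · exact h
    · exact absurd (dotProduct_self_eq_zero.mp h.symm) hx₀
  have hcne : (x₀ ⬝ᵥ x₀) ≠ 0 := ne_of_gt hc
  apply Set.Subset.antisymm
  · -- `⊆` : the RHS is convex and contains every `P i`.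
    apply convexHull_min
    · rintro _ ⟨i, rfl⟩
      have hXine : (x₀ ⬝ᵥ X i) ≠ 0 := ne_of_gt (hXx₀ i)
      refine ⟨⟨?_, ?_, ?_⟩, ?_⟩
      · intro j
        rw [hP]
        exact mul_nonneg (div_nonneg hc.le (hXx₀ i).le) (hX i j)
      · rw [hP]
        simp only [dotProduct_sub, dotProduct_smul, smul_eq_mul]
        rw [div_mul_cancel₀ _ hXine]
        ring
      · rw [hP]
        exact mul_nonneg (div_nonneg hc.le (hXx₀ i).le) (hY i)
      · rw [hPsiHat]
        apply subset_convexHull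
        exact Set.mem_iUnion.mpr ⟨i, ⟨(x₀ ⬝ᵥ x₀) / (x₀ ⬝ᵥ X i),
          div_nonneg hc.le (hXx₀ i).le, hP i⟩⟩
    · -- convexity of the RHS
      apply Convex.inter
      · rintro z hz w hw a b ha hb hab
        obtain ⟨hz1, hz2, hz3⟩ := hz
        obtain ⟨hw1, hw2, hw3⟩ := hw
        refine ⟨?_, ?_, ?_⟩
        · intro j
          have : (a • z + b • w).1 j = a * z.1 j + b * w.1 j := rfl
          rw [this]
          exact add_nonneg (mul_nonneg ha (hz1 j)) (mul_nonneg hb (hw1 j))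
        · have hz2' : x₀ ⬝ᵥ z.1 = x₀ ⬝ᵥ x₀ := by
            rw [dotProduct_sub] at hz2; linarith
          have hw2' : x₀ ⬝ᵥ w.1 = x₀ ⬝ᵥ x₀ := by
            rw [dotProduct_sub] at hw2; linarith
          have : (a • z + b • w).1 = a • z.1 + b • w.1 := rfl
          rw [this, dotProduct_sub, dotProduct_add, dotProduct_smul, dotProduct_smul,
            hz2', hw2', smul_eq_mul, smul_eq_mul]
          nlinarith
        · have : (a • z + b • w).2 = a * z.2 + b * w.2 := rfl
          rw [this]
          exact add_nonneg (mul_nonneg ha hz3) (mul_nonneg hb hw3)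
      · rw [hPsiHat]
        exact convex_convexHull ℝ _
  · -- `⊇`
    rintro z ⟨⟨hz1, hz2, hz3⟩, hzPsi⟩
    rw [hPsiHat] at hzPsi
    rw [mem_convexHull_iff_exists_fintype] at hzPsi
    obtain ⟨ι, _, w, f, hw0, hw1, hf, hsum⟩ := hzPsi
    simp only [Set.mem_iUnion, Set.mem_setOf_eq] at hf
    choose i γ hγ0 hfk using hf
    have hz1' : x₀ ⬝ᵥ z.1 = x₀ ⬝ᵥ x₀ := by
      rw [dotProduct_sub] at hz2; linarith
    have hzfst : z.1 = ∑ k, w k • (γ k • X (i k)) := by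
      rw [← hsum, Prod.fst_sum]
      refine Finset.sum_congr rfl fun k _ => ?_
      rw [hfk k]
      rfl
    have hdot : x₀ ⬝ᵥ z.1 = ∑ k, w k * (γ k * (x₀ ⬝ᵥ X (i k))) := by
      rw [hzfst]
      simp only [dotProduct, Finset.sum_apply, Pi.smul_apply, smul_eq_mul]
      simp only [Finset.mul_sum]
      rw [Finset.sum_comm]
      exact Finset.sum_congr rfl fun k _ => Finset.sum_congr rfl fun j _ => by ring
    set u : ι → ℝ := fun k => w k * γ k * (x₀ ⬝ᵥ X (i k)) / (x₀ ⬝ᵥ x₀) with hu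
    have hu0 : ∀ k, 0 ≤ u k := fun k =>
      div_nonneg (mul_nonneg (mul_nonneg (hw0 k) (hγ0 k)) (hXx₀ (i k)).le) hc.le
    have hu1 : ∑ k, u k = 1 := by
      rw [hu]
      rw [← Finset.sum_div]
      rw [div_eq_one_iff_eq hcne]
      rw [← hz1', hdot]
      exact Finset.sum_congr rfl fun k _ => by ring
    apply mem_convexHull_of_exists_fintype u (fun k => P (i k)) hu0 hu1
      (fun k => Set.mem_range_self _)
    rw [← hsum]
    refine Finset.sum_congr rfl fun k _ => ?_
    rw [hfk k, hP (i k)]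
    have hXine : (x₀ ⬝ᵥ X (i k)) ≠ 0 := ne_of_gt (hXx₀ (i k))
    have key : u k * ((x₀ ⬝ᵥ x₀) / (x₀ ⬝ᵥ X (i k))) = w k * γ k := by
      rw [hu]
      field_simp
    ext j
    · show u k * (((x₀ ⬝ᵥ x₀) / (x₀ ⬝ᵥ X (i k))) * X (i k) j) = w k * (γ k * X (i k) j)
      rw [← mul_assoc, key, mul_assoc]
    · show u k * (((x₀ ⬝ᵥ x₀) / (x₀ ⬝ᵥ X (i k))) * Y (i k)) = w k * (γ k * Y (i k))
      rw [← mul_assoc, key, mul_assoc]
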